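/- Let H be a connected k-uniform hypergraph with at least two vertices, and let u, v be two distinct vertices. Then the smallest signless Laplacian eigenvalue satisfies q_min(H) ≤ (d_u + d_v)/2. -/

import Mathlib

open Finset

/-- The set of hyperedges containing both `i` and `j`. -/
def edgesBetween {n : ℕ} (E : Finset (Finset (Fin n))) (i j : Fin n) :
    Finset (Finset (Fin n)) :=
  E.filter fun e => i ∈ e ∧ j ∈ e

/-- The degree of vertex `i`: the number of hyperedges containing `i`. -/
def hdeg {n : ℕ} (E : Finset (Finset (Fin n))) (i : Fin n) : ℕ :=
  (E.filter fun e => i ∈ e).card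

/-- Two (distinct) vertices are adjacent if some hyperedge contains both. -/
def Adj {n : ℕ} (E : Finset (Finset (Fin n))) (i j : Fin n) : Prop :=
  i ≠ j ∧ ∃ e ∈ E, i ∈ e ∧ j ∈ e

/-- The neighbours of a vertex. -/
noncomputable def neighbors {n : ℕ} (E : Finset (Finset (Fin n))) (i : Fin n) :
    Finset (Fin n) :=
  @Finset.filter _ (fun j => Adj E i j) (Classical.decPred _) Finset.univ

/-- Banerjee's adjacency matrix of a hypergraph: `A i j = ∑_{e ∋ i,j} 1/(|e|-1)`. -/
noncomputable def adjMat {n : ℕ} (E : Finset (Finset (Fin n))) :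
    Matrix (Fin n) (Fin n) ℝ :=
  Matrix.of fun i j =>
    if i = j then 0 else ∑ e ∈ edgesBetween E i j, 1 / ((e.card : ℝ) - 1)

/-- The signless Laplacian matrix `Q = D + A`. -/
noncomputable def signlessLap {n : ℕ} (E : Finset (Finset (Fin n))) :
    Matrix (Fin n) (Fin n) ℝ :=
  Matrix.diagonal (fun i => (hdeg E i : ℝ)) + adjMat E

/-- Largest eigenvalue of a real matrix. -/
noncomputable def qmax {n : ℕ} (M : Matrix (Fin n) (Fin n) ℝ) : ℝ :=
  sSup (spectrum ℝ M)

/-- Smallest eigenvalue of a real matrix. -/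
noncomputable def qmin {n : ℕ} (M : Matrix (Fin n) (Fin n) ℝ) : ℝ :=
  sInf (spectrum ℝ M)

/-- A hypergraph is `k`-uniform if every hyperedge has exactly `k` vertices. -/
def IsUniform {n : ℕ} (k : ℕ) (E : Finset (Finset (Fin n))) : Prop :=
  ∀ e ∈ E, e.card = k

/-- A hypergraph is connected if any two vertices are joined by a walk. -/
def Conn {n : ℕ} (E : Finset (Finset (Fin n))) : Prop :=
  ∀ i j : Fin n, Relation.ReflTransGen (Adj E) i j

/-! Since `Q - q_min` has nonnegative spectrum, it is positive semidefinite, so `q_min` is at most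
the Rayleigh quotient of the test vector `e_u - e_v`, which is `(d_u + d_v - A_uv - A_vu) / 2`. The entries of `A` are nonnegative because a hyperedge
through two distinct vertices has at least two elements. -/

open Matrix

theorem Matrix.IsHermitian.sInf_spectrum_mul_dotProduct_self_le {ι : Type*} [Fintype ι]
    [DecidableEq ι] {M : Matrix ι ι ℝ} (hM : M.IsHermitian) (x : ι → ℝ) :
    sInf (spectrum ℝ M) * (x ⬝ᵥ x) ≤ x ⬝ᵥ (M *ᵥ x) := by
  set μ := sInf (spectrum ℝ M)
  have hshift : (M - algebraMap ℝ _ μ).PosSemidef := by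
    refine posSemidef_iff_isHermitian_and_spectrum_nonneg.2
      ⟨hM.sub (isHermitian_diagonal _), ?_⟩
    rw [← spectrum.sub_singleton_eq]
    rintro _ ⟨t, ht, _, rfl, rfl⟩
    exact sub_nonneg.2 (csInf_le M.finite_real_spectrum.bddBelow ht)
  have := hshift.dotProduct_mulVec_nonneg x
  rw [Algebra.algebraMap_eq_smul_one, sub_mulVec, smul_mulVec, one_mulVec, star_trivial,
    dotProduct_sub, dotProduct_smul, smul_eq_mul] at this
  linarith

theorem Matrix.dotProduct_mulVec_single_sub_single {ι : Type*} [Fintype ι] [DecidableEq ι]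
    (M : Matrix ι ι ℝ) (u v : ι) :
    (Pi.single u 1 - Pi.single v 1) ⬝ᵥ (M *ᵥ (Pi.single u 1 - Pi.single v 1)) =
      M u u + M v v - M u v - M v u := by
  simp only [mulVec_sub, mulVec_single_one, sub_dotProduct, dotProduct_sub, single_one_dotProduct,
    col_apply]
  ring

theorem dotProduct_self_single_sub_single {ι : Type*} [Fintype ι] [DecidableEq ι] {u v : ι}
    (huv : u ≠ v) :
    (Pi.single u 1 - Pi.single v 1 : ι → ℝ) ⬝ᵥ (Pi.single u 1 - Pi.single v 1) = 2 := by
  simp only [sub_dotProduct, dotProduct_sub, single_one_dotProduct, Pi.single_apply, huv,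
    huv.symm]
  norm_num

theorem edgesBetween_comm {n : ℕ} (E : Finset (Finset (Fin n))) (i j : Fin n) :
    edgesBetween E i j = edgesBetween E j i :=
  filter_congr fun _ _ => and_comm

theorem adjMat_nonneg {n : ℕ} (E : Finset (Finset (Fin n))) (i j : Fin n) :
    0 ≤ adjMat E i j := by
  rw [adjMat, of_apply]
  split_ifs with hij
  · exact le_rfl
  refine sum_nonneg fun e he => ?_
  obtain ⟨-, hi, hj⟩ := mem_filter.1 he
  have : (1 : ℝ) < e.card := by exact_mod_cast one_lt_card.2 ⟨i, hi, j, hj, hij⟩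
  exact one_div_nonneg.2 (by linarith)

theorem signlessLap_isHermitian {n : ℕ} (E : Finset (Finset (Fin n))) :
    (signlessLap E).IsHermitian :=
  (isHermitian_diagonal _).add <| IsHermitian.ext fun i j => by
    simp only [adjMat, of_apply, star_trivial, eq_comm (a := i), edgesBetween_comm E i j]

theorem signlessLap_apply_self {n : ℕ} (E : Finset (Finset (Fin n))) (i : Fin n) :
    signlessLap E i i = hdeg E i := by
  simp [signlessLap, adjMat]

theorem signlessLap_apply_of_ne {n : ℕ} (E : Finset (Finset (Fin n))) {i j : Fin n} (hij : i ≠ j) :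
    signlessLap E i j = adjMat E i j := by
  simp [signlessLap, hij]

theorem stmt_10_general (n : ℕ) (E : Finset (Finset (Fin n))) (u v : Fin n) (huv : u ≠ v) :
    qmin (signlessLap E) ≤ ((hdeg E u : ℝ) + (hdeg E v : ℝ)) / 2 := by
  have hrayleigh := (signlessLap_isHermitian E).sInf_spectrum_mul_dotProduct_self_le
    (Pi.single u 1 - Pi.single v 1)
  rw [dotProduct_self_single_sub_single huv, dotProduct_mulVec_single_sub_single,
    signlessLap_apply_self, signlessLap_apply_self, signlessLap_apply_of_ne E huv,
    signlessLap_apply_of_ne E huv.symm] at hrayleigh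
  have := adjMat_nonneg E u v
  have := adjMat_nonneg E v u
  unfold qmin
  linarith

theorem stmt_10 (n k : ℕ) (hn : 2 ≤ n) (hk : 2 ≤ k) (E : Finset (Finset (Fin n)))
    (hU : IsUniform k E) (hc : Conn E) (u v : Fin n) (huv : u ≠ v) :
    qmin (signlessLap E) ≤ ((hdeg E u : ℝ) + (hdeg E v : ℝ)) / 2 :=
  stmt_10_general n E u v huv
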